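/- Let (H, Δ, ε, [−,−,−]) be a Hopf heap over a field k and suppose ∘ is a multiplication making (H, ∘, 1, Δ, ε, S_∘) a Hopf algebra on the same coalgebra (with unit 1 group-like), such that a∘[b,c,d] = [a₁∘b, a₂∘c, a₃∘d] for all a,b,c,d ∈ H. Define a·b := [a,1,b] and S(a) := [1,a,1]. Then (H,·,Δ,ε,S) is a Hopf algebra with unit 1, and (H,·,∘) is a Hopf brace, i.e. a∘(b·c) = (a₁∘b)·S(a₂)·(a₃∘c) for all a,b,c ∈ H. -/

import Mathlib

open TensorProduct

noncomputable section

variable (k : Type*) [Field k]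

section Shuffles

variable (A B P Q R S : Type*)
  [AddCommGroup A] [Module k A] [AddCommGroup B] [Module k B]
  [AddCommGroup P] [Module k P] [AddCommGroup Q] [Module k Q]
  [AddCommGroup R] [Module k R] [AddCommGroup S] [Module k S]

/-- `(a ⊗ b) ⊗ ((p ⊗ q) ⊗ (r ⊗ s)) ↦ (a ⊗ (q ⊗ r)) ⊗ (b ⊗ (p ⊗ s))`, the shuffle appearing in
the compatibility of a Hopf-heap bracket with comultiplication:
`Δ([a,b,c]) = [a₁,b₂,c₁] ⊗ [a₂,b₁,c₂]`. -/
def sweedlerShuffle :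
    ((A ⊗[k] B) ⊗[k] ((P ⊗[k] Q) ⊗[k] (R ⊗[k] S))) →ₗ[k]
      ((A ⊗[k] (Q ⊗[k] R)) ⊗[k] (B ⊗[k] (P ⊗[k] S))) :=
  (tensorTensorTensorComm k A B (Q ⊗[k] R) (P ⊗[k] S)).toLinearMap ∘ₗ
    (TensorProduct.map LinearMap.id
      ((tensorTensorTensorComm k Q P R S).toLinearMap ∘ₗ
        TensorProduct.map (TensorProduct.comm k P Q).toLinearMap LinearMap.id))

/-- `u₁ ⊗ (u₂ ⊗ (u₃ ⊗ u₄)) ↦ (u₁ ⊗ (u₄ ⊗ u₂)) ⊗ u₃`, the shuffle appearing in the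
Rota–Baxter identity. -/
def rbShuffle :
    (A ⊗[k] (P ⊗[k] (Q ⊗[k] R))) →ₗ[k] ((A ⊗[k] (R ⊗[k] P)) ⊗[k] Q) :=
  (TensorProduct.assoc k A (R ⊗[k] P) Q).symm.toLinearMap ∘ₗ
    TensorProduct.map LinearMap.id
      ((TensorProduct.comm k Q (R ⊗[k] P)).toLinearMap ∘ₗ
        (TensorProduct.assoc k Q R P).toLinearMap ∘ₗ
        (TensorProduct.comm k P (Q ⊗[k] R)).toLinearMap)

end Shuffles

section Mul

variable {C : Type*} [AddCommGroup C] [Module k C]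

/-- Right multiplication `a ↦ μ (a ⊗ b)` by a fixed element, for a bilinear product `μ`. -/
def rmulBy (μ : (C ⊗[k] C) →ₗ[k] C) (b : C) : C →ₗ[k] C :=
  μ ∘ₗ ((TensorProduct.mk k C C).flip b)

end Mul

section Heap

variable {C : Type*} [AddCommGroup C] [Module k C] [Coalgebra k C]

/-- Iterated comultiplication `a ↦ a₁ ⊗ (a₂ ⊗ a₃)`. -/
def comul2 : C →ₗ[k] (C ⊗[k] (C ⊗[k] C)) :=
  (TensorProduct.map LinearMap.id Coalgebra.comul) ∘ₗ Coalgebra.comul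

/-- Iterated comultiplication `a ↦ a₁ ⊗ (a₂ ⊗ (a₃ ⊗ a₄))`. -/
def comul3 : C →ₗ[k] (C ⊗[k] (C ⊗[k] (C ⊗[k] C))) :=
  (TensorProduct.map LinearMap.id (comul2 k)) ∘ₗ Coalgebra.comul

/-- The pointwise ternary bracket `[a,b,c]` of a Hopf heap with structure map `χ`. -/
def br (χ : (C ⊗[k] (C ⊗[k] C)) →ₗ[k] C) (a b c : C) : C := χ (a ⊗ₜ[k] (b ⊗ₜ[k] c))

/-- `x` is a group-like element of the coalgebra `C`. -/
def IsGrouplike (x : C) : Prop :=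
  Coalgebra.comul (R := k) x = x ⊗ₜ[k] x ∧ Coalgebra.counit (R := k) x = 1

/-- `(C, Δ, ε, χ)` is a Hopf heap: `χ` is a coalgebra map `C ⊗ C^cop ⊗ C → C`
(counit and comultiplication conditions, the latter in the Sweedler form
`Δ([a,b,c]) = [a₁,b₂,c₁] ⊗ [a₂,b₁,c₂]`), the bracket is associative
(`[[a,b,c],d,h] = [a,b,[c,d,h]]`), and `[c₁,c₂,a] = ε(c)a = [a,c₁,c₂]`. -/
structure IsHopfHeap (χ : (C ⊗[k] (C ⊗[k] C)) →ₗ[k] C) : Prop where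
  counit_br : ∀ a b c : C,
    Coalgebra.counit (R := k) (br k χ a b c) =
      Coalgebra.counit (R := k) a * Coalgebra.counit (R := k) b * Coalgebra.counit (R := k) c
  comul_br : ∀ a b c : C,
    Coalgebra.comul (R := k) (br k χ a b c) =
      TensorProduct.map χ χ (sweedlerShuffle k C C C C C C
        ((Coalgebra.comul (R := k) a) ⊗ₜ[k]
          ((Coalgebra.comul (R := k) b) ⊗ₜ[k] (Coalgebra.comul (R := k) c))))
  assoc_br : ∀ a b c d h : C,
    br k χ (br k χ a b c) d h = br k χ a b (br k χ c d h)
  left_cancel : ∀ c a : C,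
    χ ((TensorProduct.assoc k C C C) ((Coalgebra.comul (R := k) c) ⊗ₜ[k] a)) =
      Coalgebra.counit (R := k) c • a
  right_cancel : ∀ c a : C,
    χ (a ⊗ₜ[k] (Coalgebra.comul (R := k) c)) = Coalgebra.counit (R := k) c • a

/-- `B` is a Rota–Baxter operator on the Hopf heap `(C, Δ, χ)`:
`B [a,b,c] = [B a, B b, B c]` and
`B(a₁) ⊗ B(a₂) = [B(a)₁, B(B(a)₄), B(B(a)₂)] ⊗ B(a)₃`. -/
structure IsRBOp (χ : (C ⊗[k] (C ⊗[k] C)) →ₗ[k] C) (B : C →ₗ[k] C) : Prop where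
  map_br : ∀ a b c : C, B (br k χ a b c) = br k χ (B a) (B b) (B c)
  rb : ∀ a : C,
    TensorProduct.map B B (Coalgebra.comul (R := k) a) =
      TensorProduct.map (χ ∘ₗ TensorProduct.map LinearMap.id (TensorProduct.map B B))
        LinearMap.id (rbShuffle k C C C C (comul3 k (B a)))

/-- The multiplication `a ·ₓ b = [a, x, b]` of the Hopf algebra `H_x(C)`, as a linear map. -/
def heapMul (χ : (C ⊗[k] (C ⊗[k] C)) →ₗ[k] C) (x : C) : (C ⊗[k] C) →ₗ[k] C :=
  χ ∘ₗ TensorProduct.map LinearMap.id (TensorProduct.mk k C C x)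

/-- The antipode `S_x(a) = [x, a, x]` of the Hopf algebra `H_x(C)`, as a linear map. -/
def heapAntipode (χ : (C ⊗[k] (C ⊗[k] C)) →ₗ[k] C) (x : C) : C →ₗ[k] C :=
  χ ∘ₗ (TensorProduct.mk k C (C ⊗[k] C) x) ∘ₗ ((TensorProduct.mk k C C).flip x)

end Heap

section HeapHom

variable {C D : Type*} [AddCommGroup C] [Module k C] [Coalgebra k C]
  [AddCommGroup D] [Module k D] [Coalgebra k D]

/-- `f` is a homomorphism of Hopf heaps: a coalgebra map preserving the bracket. -/
def IsHeapHom (χC : (C ⊗[k] (C ⊗[k] C)) →ₗ[k] C) (χD : (D ⊗[k] (D ⊗[k] D)) →ₗ[k] D)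
    (f : C →ₗ[k] D) : Prop :=
  (∀ a : C, Coalgebra.comul (R := k) (f a) = TensorProduct.map f f (Coalgebra.comul (R := k) a)) ∧
  (∀ a : C, Coalgebra.counit (R := k) (f a) = Coalgebra.counit (R := k) a) ∧
  (∀ a b c : C, f (br k χC a b c) = br k χD (f a) (f b) (f c))

end HeapHom

section HopfAlg

variable (H : Type*) [Ring H] [HopfAlgebra k H]

/-- The Hopf-heap structure map `a ⊗ b ⊗ c ↦ a · S(b) · c` of a Hopf algebra. -/
def hopfHeapChi : (H ⊗[k] (H ⊗[k] H)) →ₗ[k] H :=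
  (LinearMap.mul' k H) ∘ₗ TensorProduct.map LinearMap.id
    ((LinearMap.mul' k H) ∘ₗ TensorProduct.map (HopfAlgebra.antipode (R := k)) LinearMap.id)

/-- The triple multiplication `a ⊗ (b ⊗ c) ↦ a·(b·c)`. -/
def mulTriple : (H ⊗[k] (H ⊗[k] H)) →ₗ[k] H :=
  (LinearMap.mul' k H) ∘ₗ TensorProduct.map LinearMap.id (LinearMap.mul' k H)

end HopfAlg

end

/-! When `e` is group-like, the heap axioms specialised at `Δe = e ⊗ e` make `a · b = [a,e,b]` a
Hopf algebra with antipode `S(a) = [e,a,e]`, and associativity of the bracket shows that every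
bracket is recovered as `[x,y,z] = x · S(y) · z`. The truss distributivity with middle argument `e`,
together with `a₂ ∘ e = a₂`, then reads
`a ∘ (b · c) = [a₁ ∘ b, a₂, a₃ ∘ c] = (a₁ ∘ b) · S(a₂) · (a₃ ∘ c)`. -/

section HeapHopfAlgebra

variable {k C : Type*} [Field k] [AddCommGroup C] [Module k C]

@[simp]
theorem heapMul_tmul (χ : (C ⊗[k] (C ⊗[k] C)) →ₗ[k] C) (x a b : C) :
    heapMul k χ x (a ⊗ₜ[k] b) = br k χ a x b :=
  rfl

@[simp]
theorem heapAntipode_apply (χ : (C ⊗[k] (C ⊗[k] C)) →ₗ[k] C) (x a : C) :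
    heapAntipode k χ x a = br k χ x a x :=
  rfl

theorem rmulBy_eq_id {μ : (C ⊗[k] C) →ₗ[k] C} {e : C} (h : ∀ a : C, μ (a ⊗ₜ[k] e) = a) :
    rmulBy k μ e = LinearMap.id :=
  LinearMap.ext h

theorem map_sweedlerShuffle_tmul_self_tmul (χ : (C ⊗[k] (C ⊗[k] C)) →ₗ[k] C) (x : C)
    (u v : C ⊗[k] C) :
    TensorProduct.map χ χ (sweedlerShuffle k C C C C C C (u ⊗ₜ[k] ((x ⊗ₜ[k] x) ⊗ₜ[k] v))) =
      TensorProduct.map (heapMul k χ x) (heapMul k χ x)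
        (tensorTensorTensorComm k C C C C (u ⊗ₜ[k] v)) := by
  induction u using TensorProduct.induction_on with
  | zero => simp
  | add u u' hu hu' => simp only [add_tmul, map_add, hu, hu']
  | tmul a a' =>
    induction v using TensorProduct.induction_on with
    | zero => simp
    | add v v' hv hv' => simp only [tmul_add, map_add, hv, hv']
    | tmul b b' => rfl

variable [Coalgebra k C] {χ : (C ⊗[k] (C ⊗[k] C)) →ₗ[k] C} {e : C}

namespace IsHopfHeap

variable (hχ : IsHopfHeap k χ) (he : IsGrouplike k e)
include hχ he

theorem br_grouplike_left (a : C) : br k χ e e a = a := by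
  simpa [he.1, he.2, br] using hχ.left_cancel e a

theorem br_grouplike_right (a : C) : br k χ a e e = a := by
  simpa [he.1, he.2, br] using hχ.right_cancel e a

theorem comul_heapMul (a b : C) :
    Coalgebra.comul (R := k) (heapMul k χ e (a ⊗ₜ[k] b)) =
      TensorProduct.map (heapMul k χ e) (heapMul k χ e)
        (tensorTensorTensorComm k C C C C
          (Coalgebra.comul (R := k) a ⊗ₜ[k] Coalgebra.comul (R := k) b)) := by
  rw [heapMul_tmul, hχ.comul_br, he.1, map_sweedlerShuffle_tmul_self_tmul]

theorem counit_heapMul (a b : C) :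
    Coalgebra.counit (R := k) (heapMul k χ e (a ⊗ₜ[k] b)) =
      Coalgebra.counit (R := k) a * Coalgebra.counit (R := k) b := by
  rw [heapMul_tmul, hχ.counit_br, he.2, mul_one]

theorem heapMul_comp_map_heapAntipode_id :
    heapMul k χ e ∘ₗ TensorProduct.map (heapAntipode k χ e) LinearMap.id =
      χ ∘ₗ TensorProduct.mk k C (C ⊗[k] C) e := by
  ext x y
  change br k χ (br k χ e x e) e y = br k χ e x y
  rw [hχ.assoc_br, hχ.br_grouplike_left he]

theorem heapMul_comp_map_id_heapAntipode :
    heapMul k χ e ∘ₗ TensorProduct.map LinearMap.id (heapAntipode k χ e) =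
      χ ∘ₗ (TensorProduct.assoc k C C C).toLinearMap ∘ₗ
        (TensorProduct.mk k (C ⊗[k] C) C).flip e := by
  ext x y
  change br k χ x e (br k χ e y e) = br k χ x y e
  rw [← hχ.assoc_br, hχ.br_grouplike_right he]

theorem heapMul_heapAntipode_left (a : C) :
    heapMul k χ e (TensorProduct.map (heapAntipode k χ e) LinearMap.id
      (Coalgebra.comul (R := k) a)) = Coalgebra.counit (R := k) a • e := by
  rw [← LinearMap.comp_apply, hχ.heapMul_comp_map_heapAntipode_id he]
  exact hχ.right_cancel a e

theorem heapMul_heapAntipode_right (a : C) :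
    heapMul k χ e (TensorProduct.map LinearMap.id (heapAntipode k χ e)
      (Coalgebra.comul (R := k) a)) = Coalgebra.counit (R := k) a • e := by
  rw [← LinearMap.comp_apply, hχ.heapMul_comp_map_id_heapAntipode he]
  exact hχ.left_cancel a e

theorem br_eq_heapMul_heapAntipode (x y z : C) :
    br k χ x y z = br k χ (br k χ x e (br k χ e y e)) e z := by
  rw [hχ.assoc_br, hχ.assoc_br, hχ.br_grouplike_left he, ← hχ.assoc_br,
    hχ.br_grouplike_right he]

theorem eq_heapMul_comp_heapAntipode :
    χ = heapMul k χ e ∘ₗ TensorProduct.map (heapMul k χ e) LinearMap.id ∘ₗ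
      (TensorProduct.assoc k C C C).symm.toLinearMap ∘ₗ
      TensorProduct.map LinearMap.id (TensorProduct.map (heapAntipode k χ e) LinearMap.id) := by
  ext x y z
  exact hχ.br_eq_heapMul_heapAntipode he x y z

theorem mul_heapMul {μ : (C ⊗[k] C) →ₗ[k] C}
    (hmul_e : ∀ a : C, μ (a ⊗ₜ[k] e) = a)
    (hdist : ∀ a b c d : C, μ (a ⊗ₜ[k] br k χ b c d) =
      χ ((TensorProduct.map (rmulBy k μ b)
        (TensorProduct.map (rmulBy k μ c) (rmulBy k μ d))) (comul2 k a)))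
    (a b c : C) :
    μ (a ⊗ₜ[k] heapMul k χ e (b ⊗ₜ[k] c)) =
      heapMul k χ e ((TensorProduct.map (heapMul k χ e) LinearMap.id)
        ((TensorProduct.assoc k C C C).symm
          ((TensorProduct.map (rmulBy k μ b)
            (TensorProduct.map (heapAntipode k χ e) (rmulBy k μ c)))
            (comul2 k a)))) := by
  have hmap :
      TensorProduct.map (rmulBy k μ b) (TensorProduct.map (heapAntipode k χ e) (rmulBy k μ c)) =
      TensorProduct.map LinearMap.id (TensorProduct.map (heapAntipode k χ e) LinearMap.id) ∘ₗ
        TensorProduct.map (rmulBy k μ b) (TensorProduct.map LinearMap.id (rmulBy k μ c)) := by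
    simp only [← TensorProduct.map_comp, LinearMap.id_comp, LinearMap.comp_id]
  rw [heapMul_tmul, hdist, rmulBy_eq_id hmul_e, hmap]
  exact LinearMap.congr_fun (hχ.eq_heapMul_comp_heapAntipode he) _

end IsHopfHeap

end HeapHopfAlgebra

theorem hopfTruss_unital_gives_hopfBrace_general {k : Type*} [Field k] {H : Type*}
    [AddCommGroup H] [Module k H] [Coalgebra k H]
    (χ : (H ⊗[k] (H ⊗[k] H)) →ₗ[k] H) (hχ : IsHopfHeap k χ)
    (μ : (H ⊗[k] H) →ₗ[k] H) (e : H)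
    -- `(H, ∘ = μ, e, Tμ)` is a Hopf algebra on the same coalgebra, with `e` group-like
    (hunit : ∀ a : H, μ (e ⊗ₜ[k] a) = a ∧ μ (a ⊗ₜ[k] e) = a)
    (he : IsGrouplike k e)
    -- the Hopf truss distributivity `a∘[b,c,d] = [a₁∘b, a₂∘c, a₃∘d]`
    (hdist : ∀ a b c d : H, μ (a ⊗ₜ[k] br k χ b c d) =
      χ ((TensorProduct.map (rmulBy k μ b)
        (TensorProduct.map (rmulBy k μ c) (rmulBy k μ d))) (comul2 k a))) :
    -- `(H, · , e, S)` with `a·b = [a,e,b]`, `S(a) = [e,a,e]` is a Hopf algebra...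
    (∀ a b c : H, br k χ (br k χ a e b) e c = br k χ a e (br k χ b e c)) ∧
    (∀ a : H, br k χ e e a = a ∧ br k χ a e e = a) ∧
    (∀ a b : H,
      Coalgebra.comul (R := k) (heapMul k χ e (a ⊗ₜ[k] b)) =
        TensorProduct.map (heapMul k χ e) (heapMul k χ e)
          ((tensorTensorTensorComm k H H H H)
            ((Coalgebra.comul (R := k) a) ⊗ₜ[k] (Coalgebra.comul (R := k) b)))) ∧
    (∀ a b : H,
      Coalgebra.counit (R := k) (heapMul k χ e (a ⊗ₜ[k] b)) =
        Coalgebra.counit (R := k) a * Coalgebra.counit (R := k) b) ∧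
    (∀ a : H,
      heapMul k χ e (TensorProduct.map (heapAntipode k χ e) LinearMap.id
          (Coalgebra.comul (R := k) a)) = Coalgebra.counit (R := k) a • e ∧
      heapMul k χ e (TensorProduct.map LinearMap.id (heapAntipode k χ e)
          (Coalgebra.comul (R := k) a)) = Coalgebra.counit (R := k) a • e) ∧
    -- ... and `(H, ·, ∘)` is a Hopf brace: `a∘(b·c) = (a₁∘b)·S(a₂)·(a₃∘c)`
    (∀ a b c : H, μ (a ⊗ₜ[k] heapMul k χ e (b ⊗ₜ[k] c)) =
      heapMul k χ e ((TensorProduct.map (heapMul k χ e) LinearMap.id)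
        ((TensorProduct.assoc k H H H).symm
          ((TensorProduct.map (rmulBy k μ b)
            (TensorProduct.map (heapAntipode k χ e) (rmulBy k μ c)))
            (comul2 k a))))) :=
  ⟨fun a b c => hχ.assoc_br a e b e c,
    fun a => ⟨hχ.br_grouplike_left he a, hχ.br_grouplike_right he a⟩,
    hχ.comul_heapMul he,
    hχ.counit_heapMul he,
    fun a => ⟨hχ.heapMul_heapAntipode_left he a, hχ.heapMul_heapAntipode_right he a⟩,
    hχ.mul_heapMul he (fun a => (hunit a).2) hdist⟩

/-- a Hopf truss `(H,χ,∘)` in which `(H,∘,1)` is a Hopf algebra gives rise to a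
Hopf brace, via `a·b := [a,1,b]`, `S(a) := [1,a,1]`. -/
theorem hopfTruss_unital_gives_hopfBrace {k : Type*} [Field k] {H : Type*}
    [AddCommGroup H] [Module k H] [Coalgebra k H]
    (χ : (H ⊗[k] (H ⊗[k] H)) →ₗ[k] H) (hχ : IsHopfHeap k χ)
    (μ : (H ⊗[k] H) →ₗ[k] H) (e : H) (Tμ : H →ₗ[k] H)
    -- `(H, ∘ = μ, e, Tμ)` is a Hopf algebra on the same coalgebra, with `e` group-like
    (hassoc : ∀ a b c : H, μ (μ (a ⊗ₜ[k] b) ⊗ₜ[k] c) = μ (a ⊗ₜ[k] μ (b ⊗ₜ[k] c)))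
    (hunit : ∀ a : H, μ (e ⊗ₜ[k] a) = a ∧ μ (a ⊗ₜ[k] e) = a)
    (he : IsGrouplike k e)
    (hcomul : ∀ a b : H, Coalgebra.comul (R := k) (μ (a ⊗ₜ[k] b)) =
      TensorProduct.map μ μ ((tensorTensorTensorComm k H H H H)
        ((Coalgebra.comul (R := k) a) ⊗ₜ[k] (Coalgebra.comul (R := k) b))))
    (hcounit : ∀ a b : H, Coalgebra.counit (R := k) (μ (a ⊗ₜ[k] b)) =
      Coalgebra.counit (R := k) a * Coalgebra.counit (R := k) b)
    (hT : ∀ a : H,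
      μ (TensorProduct.map Tμ LinearMap.id (Coalgebra.comul (R := k) a)) =
        Coalgebra.counit (R := k) a • e ∧
      μ (TensorProduct.map LinearMap.id Tμ (Coalgebra.comul (R := k) a)) =
        Coalgebra.counit (R := k) a • e)
    -- the Hopf truss distributivity `a∘[b,c,d] = [a₁∘b, a₂∘c, a₃∘d]`
    (hdist : ∀ a b c d : H, μ (a ⊗ₜ[k] br k χ b c d) =
      χ ((TensorProduct.map (rmulBy k μ b)
        (TensorProduct.map (rmulBy k μ c) (rmulBy k μ d))) (comul2 k a))) :
    -- `(H, · , e, S)` with `a·b = [a,e,b]`, `S(a) = [e,a,e]` is a Hopf algebra...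
    (∀ a b c : H, br k χ (br k χ a e b) e c = br k χ a e (br k χ b e c)) ∧
    (∀ a : H, br k χ e e a = a ∧ br k χ a e e = a) ∧
    (∀ a b : H,
      Coalgebra.comul (R := k) (heapMul k χ e (a ⊗ₜ[k] b)) =
        TensorProduct.map (heapMul k χ e) (heapMul k χ e)
          ((tensorTensorTensorComm k H H H H)
            ((Coalgebra.comul (R := k) a) ⊗ₜ[k] (Coalgebra.comul (R := k) b)))) ∧
    (∀ a b : H,
      Coalgebra.counit (R := k) (heapMul k χ e (a ⊗ₜ[k] b)) =
        Coalgebra.counit (R := k) a * Coalgebra.counit (R := k) b) ∧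
    (∀ a : H,
      heapMul k χ e (TensorProduct.map (heapAntipode k χ e) LinearMap.id
          (Coalgebra.comul (R := k) a)) = Coalgebra.counit (R := k) a • e ∧
      heapMul k χ e (TensorProduct.map LinearMap.id (heapAntipode k χ e)
          (Coalgebra.comul (R := k) a)) = Coalgebra.counit (R := k) a • e) ∧
    -- ... and `(H, ·, ∘)` is a Hopf brace: `a∘(b·c) = (a₁∘b)·S(a₂)·(a₃∘c)`
    (∀ a b c : H, μ (a ⊗ₜ[k] heapMul k χ e (b ⊗ₜ[k] c)) =
      heapMul k χ e ((TensorProduct.map (heapMul k χ e) LinearMap.id)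
        ((TensorProduct.assoc k H H H).symm
          ((TensorProduct.map (rmulBy k μ b)
            (TensorProduct.map (heapAntipode k χ e) (rmulBy k μ c)))
            (comul2 k a))))) :=
  hopfTruss_unital_gives_hopfBrace_general χ hχ μ e hunit he hdist
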